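/- Let K and L be symmetric convex bodies in ℝⁿ and τ > 0. If the function F(x) = vol(K ∩ (x + τK)) depends only on ‖x‖_L (i.e., F(x) = F(y) whenever ‖x‖_L = ‖y‖_L), then L is homothetic to K, i.e., there exists α > 0 such that ‖x‖_L = α‖x‖_K for all x. -/

import Mathlib

open MeasureTheory Set
open scoped Pointwise

section Aux

variable {n : ℕ}

private lemma aux_interior_neg (s : Set (EuclideanSpace ℝ (Fin n))) :
    interior (-s) = -interior s := by
  simp only [← Set.image_neg_eq_neg]
  exact ((Homeomorph.neg (EuclideanSpace ℝ (Fin n))).image_interior s).symm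

private lemma aux_interior_vadd (x : EuclideanSpace ℝ (Fin n))
    (s : Set (EuclideanSpace ℝ (Fin n))) :
    interior (x +ᵥ s) = x +ᵥ interior s := by
  simp only [← Set.image_vadd, vadd_eq_add]
  have := ((Homeomorph.addLeft x).image_interior s).symm
  simpa using this

private lemma aux_real_le {a b c : ℝ} (hc : 0 < c) (ha : 0 ≤ a)
    (h : ∀ t : ℝ, 0 < t → (t * a < c → t * b < c)) : b ≤ a := by
  by_contra hlt
  push_neg at hlt
  have hb' : 0 < b := ha.trans_lt hlt
  have ht : 0 < c / b := div_pos hc hb'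
  have h1 : c / b * a < c := by
    calc c / b * a < c / b * b := mul_lt_mul_of_pos_left hlt ht
    _ = c := div_mul_cancel₀ c hb'.ne'
  have := h _ ht h1
  rw [div_mul_cancel₀ c hb'.ne'] at this
  exact lt_irrefl c this

/-- Zero lies in the interior of a symmetric set whose interior is convex and nonempty. -/
private lemma aux_zero_mem_interior {K : Set (EuclideanSpace ℝ (Fin n))}
    (hKconv : Convex ℝ K) (hKint : (interior K).Nonempty) (hKsymm : K = -K) :
    (0 : EuclideanSpace ℝ (Fin n)) ∈ interior K := by
  obtain ⟨a, ha⟩ := hKint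
  have hna : -a ∈ interior K := by
    rw [hKsymm, aux_interior_neg]
    exact Set.neg_mem_neg.2 ha
  have hconv : Convex ℝ (interior K) := hKconv.interior
  have := hconv ha hna (by norm_num : (0:ℝ) ≤ 1/2) (by norm_num : (0:ℝ) ≤ 1/2) (by norm_num)
  simpa using this

/-- The key measure-theoretic fact:
`vol (K ∩ (x + τK)) > 0` iff `gauge K x < 1 + τ`. -/
private lemma aux_pos_iff {K : Set (EuclideanSpace ℝ (Fin n))}
    (hKconv : Convex ℝ K)
    (h0K : (0 : EuclideanSpace ℝ (Fin n)) ∈ interior K)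
    (hIneg : interior K = -interior K)
    {τ : ℝ} (hτ : 0 < τ) (x : EuclideanSpace ℝ (Fin n)) :
    0 < volume (K ∩ (fun z => x + τ • z) '' K) ↔ gauge K x < 1 + τ := by
  have hKnhds : K ∈ nhds (0 : EuclideanSpace ℝ (Fin n)) := mem_interior_iff_mem_nhds.1 h0K
  have himg : (fun z : EuclideanSpace ℝ (Fin n) => x + τ • z) '' K = x +ᵥ τ • K := by
    rw [← Set.image_smul, ← Set.image_vadd, Set.image_image]
    rfl
  rw [himg]
  have hintA : interior (x +ᵥ τ • K) = x +ᵥ τ • interior K := by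
    rw [aux_interior_vadd, interior_smul₀ hτ.ne' K]
  constructor
  · intro hpos
    have hC : Convex ℝ (K ∩ (x +ᵥ τ • K)) := hKconv.inter ((hKconv.smul τ).vadd x)
    have hne : (interior (K ∩ (x +ᵥ τ • K))).Nonempty := by
      by_contra hemp
      rw [Set.not_nonempty_iff_eq_empty] at hemp
      have hfr : volume (frontier (K ∩ (x +ᵥ τ • K))) = 0 := hC.addHaar_frontier volume
      have : volume (K ∩ (x +ᵥ τ • K)) = 0 := by
        refine measure_mono_null ?_ hfr
        rw [frontier, hemp, diff_empty]
        exact subset_closure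
      exact absurd this hpos.ne'
    obtain ⟨a, ha⟩ := hne
    rw [interior_inter, hintA] at ha
    obtain ⟨haK, c, hc, hac⟩ := ha
    obtain ⟨d, hd, hdc⟩ := hc
    have hx : x = a + τ • (-d) := by
      have : a = x + τ • d := by rw [← hac, ← hdc]; rfl
      rw [this]; module
    have hnd : (-d : EuclideanSpace ℝ (Fin n)) ∈ interior K := by
      rw [hIneg]; exact Set.neg_mem_neg.2 hd
    have h1 : gauge K a < 1 := interior_subset_gauge_lt_one K haK
    have h2 : gauge K (-d) < 1 := interior_subset_gauge_lt_one K hnd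
    calc gauge K x ≤ gauge K a + gauge K (τ • (-d)) := by
          rw [hx]; exact gauge_add_le hKconv (absorbent_nhds_zero hKnhds) _ _
      _ = gauge K a + τ * gauge K (-d) := by rw [gauge_smul_of_nonneg hτ.le]; rfl
      _ < 1 + τ * 1 := add_lt_add h1 (mul_lt_mul_of_pos_left h2 hτ)
      _ = 1 + τ := by ring
  · intro hg
    set y := (1 + τ)⁻¹ • x with hy
    have h1τ : (0:ℝ) < 1 + τ := by linarith
    have hgy : gauge K y < 1 := by
      rw [hy, gauge_smul_of_nonneg (inv_nonneg.2 h1τ.le), smul_eq_mul]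
      rw [inv_mul_lt_iff₀ h1τ, mul_one]
      exact hg
    have hyint : y ∈ interior K := by
      rwa [← gauge_lt_one_iff_mem_interior hKconv hKnhds]
    have hny : (-y : EuclideanSpace ℝ (Fin n)) ∈ interior K := by
      rw [hIneg]; exact Set.neg_mem_neg.2 hyint
    have hxy : x = (1 + τ) • y := by
      rw [hy, smul_smul, mul_inv_cancel₀ h1τ.ne', one_smul]
    have hmem : y ∈ interior K ∩ (x +ᵥ τ • interior K) := by
      refine ⟨hyint, τ • (-y), ⟨-y, hny, rfl⟩, ?_⟩
      show x + τ • (-y) = y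
      rw [hxy]; module
    have hopen : IsOpen (interior K ∩ (x +ᵥ τ • interior K)) := by
      rw [← hintA, ← interior_inter]; exact isOpen_interior
    have hsub : interior K ∩ (x +ᵥ τ • interior K) ⊆ K ∩ (x +ᵥ τ • K) := by
      rw [← hintA, ← interior_inter]; exact interior_subset
    calc (0:ENNReal) < volume (interior K ∩ (x +ᵥ τ • interior K)) :=
          hopen.measure_pos volume ⟨y, hmem⟩
      _ ≤ volume (K ∩ (x +ᵥ τ • K)) := measure_mono hsub

end Aux

/-- If `vol (K ∩ (x + τK))` depends only on `‖x‖_L`, then `L` is homothetic to `K`. -/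
theorem stmt_0 (n : ℕ) (K L : Set (EuclideanSpace ℝ (Fin n)))
    (hKcomp : IsCompact K) (hKconv : Convex ℝ K) (hKint : (interior K).Nonempty)
    (hKsymm : K = -K)
    (hLcomp : IsCompact L) (hLconv : Convex ℝ L) (hLint : (interior L).Nonempty)
    (hLsymm : L = -L)
    (τ : ℝ) (hτ : 0 < τ)
    (hF : ∀ x y : EuclideanSpace ℝ (Fin n), gauge L x = gauge L y →
      volume (K ∩ (fun z => x + τ • z) '' K) = volume (K ∩ (fun z => y + τ • z) '' K)) :
    ∃ α : ℝ, 0 < α ∧ ∀ x : EuclideanSpace ℝ (Fin n), gauge L x = α * gauge K x := by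
  rcases Nat.eq_zero_or_pos n with hn | hn
  · -- trivial case: everything is `0`
    subst hn
    refine ⟨1, one_pos, fun x => ?_⟩
    have hx : x = 0 := by
      ext i
      exact i.elim0
    rw [hx, gauge_zero, gauge_zero, mul_zero]
  -- basic facts
  have h0K : (0 : EuclideanSpace ℝ (Fin n)) ∈ interior K :=
    aux_zero_mem_interior hKconv hKint hKsymm
  have h0L : (0 : EuclideanSpace ℝ (Fin n)) ∈ interior L :=
    aux_zero_mem_interior hLconv hLint hLsymm
  have hInegK : interior K = -interior K := by
    conv_lhs => rw [hKsymm, aux_interior_neg]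
  have hInegL : interior L = -interior L := by
    conv_lhs => rw [hLsymm, aux_interior_neg]
  have habsK : Absorbent ℝ K := absorbent_nhds_zero (mem_interior_iff_mem_nhds.1 h0K)
  have habsL : Absorbent ℝ L := absorbent_nhds_zero (mem_interior_iff_mem_nhds.1 h0L)
  have hbndK : Bornology.IsVonNBounded ℝ K :=
    NormedSpace.isVonNBounded_of_isBounded ℝ hKcomp.isBounded
  have hbndL : Bornology.IsVonNBounded ℝ L :=
    NormedSpace.isVonNBounded_of_isBounded ℝ hLcomp.isBounded
  have h1τ : (0:ℝ) < 1 + τ := by linarith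
  -- key step: gauge K is a function of gauge L
  have hgauge : ∀ x y : EuclideanSpace ℝ (Fin n),
      gauge L x = gauge L y → gauge K x = gauge K y := by
    intro x y hxy
    have key : ∀ t : ℝ, 0 < t → (t * gauge K x < 1 + τ ↔ t * gauge K y < 1 + τ) := by
      intro t ht
      have hL : gauge L (t • x) = gauge L (t • y) := by
        rw [gauge_smul_of_nonneg ht.le, gauge_smul_of_nonneg ht.le, smul_eq_mul,
          smul_eq_mul, hxy]
      have hvol := hF (t • x) (t • y) hL
      have h1 := aux_pos_iff hKconv h0K hInegK hτ (t • x)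
      have h2 := aux_pos_iff hKconv h0K hInegK hτ (t • y)
      rw [hvol] at h1
      rw [gauge_smul_of_nonneg ht.le, smul_eq_mul] at h1 h2
      rw [← h1, ← h2]
    exact le_antisymm
      (aux_real_le h1τ (gauge_nonneg y) fun t ht h => (key t ht).2 h)
      (aux_real_le h1τ (gauge_nonneg x) fun t ht h => (key t ht).1 h)
  -- pick a nonzero reference vector
  set x₀ : EuclideanSpace ℝ (Fin n) := EuclideanSpace.single ⟨0, hn⟩ (1:ℝ) with hx₀def
  have hx₀ : x₀ ≠ 0 := by
    intro h
    have h1 : x₀ ⟨0, hn⟩ = 1 := by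
      rw [hx₀def, EuclideanSpace.single_apply]
      simp
    rw [h] at h1
    simp at h1
  have hgKx₀ : 0 < gauge K x₀ := (gauge_pos habsK hbndK).2 hx₀
  have hgLx₀ : 0 < gauge L x₀ := (gauge_pos habsL hbndL).2 hx₀
  refine ⟨gauge L x₀ / gauge K x₀, div_pos hgLx₀ hgKx₀, fun x => ?_⟩
  rcases eq_or_ne x 0 with rfl | hx
  · rw [gauge_zero, gauge_zero, mul_zero]
  · have hgLx : 0 < gauge L x := (gauge_pos habsL hbndL).2 hx
    set s : ℝ := gauge L x / gauge L x₀ with hs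
    have hs0 : 0 < s := div_pos hgLx hgLx₀
    have hLeq : gauge L (s • x₀) = gauge L x := by
      rw [gauge_smul_of_nonneg hs0.le, smul_eq_mul, hs, div_mul_cancel₀ _ hgLx₀.ne']
    have hKeq : gauge K (s • x₀) = gauge K x := hgauge _ _ hLeq
    rw [gauge_smul_of_nonneg hs0.le, smul_eq_mul] at hKeq
    rw [← hKeq, ← hLeq, gauge_smul_of_nonneg hs0.le, smul_eq_mul]
    field_simp [hgKx₀.ne']
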